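/- arXiv:2411.01793 — 4 statements merged into one kernel-verified Lean document; each statement's English description precedes it below -/
import Mathlib

section
/- Let H₁, H₂ be Hilbert spaces, P : H₁ →L H₁ self-adjoint and coercive with constant ε > 0, Q : H₁ →L H₂, R : H₂ →L H₂ self-adjoint, and suppose the Schur complement R − Q P⁻¹ Q* is coercive with constant ε. Then the block operator M = [[P, Q*], [Q, R]] is coercive: there exists δ > 0 such that ⟪v, M v⟫ ≥ δ‖v‖² for all v ∈ H₁ × H₂. -/
open RealInnerProductSpace ContinuousLinearMap

set_option maxHeartbeats 1000000 in
/-- If `P` is self-adjoint and coercive with constant `ε`, and the Schur complement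
`R - Q P⁻¹ Q*` is coercive with constant `ε`, then the block operator `[[P, Q*],[Q, R]]`
on `H₁ × H₂` is coercive with some constant `δ > 0`. -/
theorem schur_complement_sufficiency
    {H₁ H₂ : Type*} [NormedAddCommGroup H₁] [InnerProductSpace ℝ H₁] [CompleteSpace H₁]
    [NormedAddCommGroup H₂] [InnerProductSpace ℝ H₂] [CompleteSpace H₂]
    (P : H₁ →L[ℝ] H₁) (Q : H₁ →L[ℝ] H₂) (R : H₂ →L[ℝ] H₂)
    (hP : IsSelfAdjoint P) (hR : IsSelfAdjoint R)
    (ε : ℝ) (hε : 0 < ε)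
    (hPcoer : ∀ x : H₁, ε * ‖x‖ ^ 2 ≤ ⟪x, P x⟫)
    (Pinv : H₁ →L[ℝ] H₁)
    (hPinv₁ : Pinv ∘L P = ContinuousLinearMap.id ℝ H₁)
    (hPinv₂ : P ∘L Pinv = ContinuousLinearMap.id ℝ H₁)
    (hSchur : ∀ y : H₂, ε * ‖y‖ ^ 2 ≤ ⟪y, (R - Q ∘L Pinv ∘L adjoint Q) y⟫) :
    ∃ δ > 0, ∀ (x : H₁) (y : H₂),
      δ * (‖x‖ ^ 2 + ‖y‖ ^ 2) ≤
        ⟪x, P x + (adjoint Q) y⟫ + ⟪y, Q x + R y⟫ := by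
  obtain ⟨K, hK⟩ : ∃ K : H₂ →L[ℝ] H₁, K = Pinv ∘L adjoint Q := ⟨_, rfl⟩
  rw [show Q ∘L Pinv ∘L adjoint Q = Q ∘L K by rw [hK]] at hSchur
  refine ⟨ε / (2 * ‖K‖ ^ 2 + 2), by positivity, fun x y => ?_⟩
  obtain ⟨u, hu⟩ : ∃ u : H₁, u = x + K y := ⟨_, rfl⟩
  have hPK : P (K y) = adjoint Q y := by
    have := congrArg (fun T : H₁ →L[ℝ] H₁ => T (adjoint Q y)) hPinv₂
    simpa [hK] using this
  have hsa : ∀ a b : H₁, ⟪a, P b⟫ = ⟪P a, b⟫ := by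
    intro a b
    rw [← hP.adjoint_eq, adjoint_inner_left, hP.adjoint_eq]
  have key : ⟪x, P x + (adjoint Q) y⟫ + ⟪y, Q x + R y⟫
      = ⟪u, P u⟫ + ⟪y, (R - Q ∘L K) y⟫ := by
    have e1 : ⟪u, P u⟫ = ⟪x, P x⟫ + ⟪x, adjoint Q y⟫ + ⟪y, Q x⟫ + ⟪y, Q (K y)⟫ := by
      rw [hu]
      rw [map_add, inner_add_left, inner_add_right, inner_add_right, hPK]
      have h1 : ⟪K y, P x⟫ = ⟪y, Q x⟫ := by
        rw [hsa, hPK, adjoint_inner_left]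
      have h2 : ⟪K y, adjoint Q y⟫ = ⟪y, Q (K y)⟫ := by
        rw [adjoint_inner_right, real_inner_comm]
      rw [h1, h2]; ring
    have e2 : ⟪y, (R - Q ∘L K) y⟫ = ⟪y, R y⟫ - ⟪y, Q (K y)⟫ := by
      simp [inner_sub_right]
    rw [e1, e2, inner_add_right, inner_add_right]; ring
  have h1 : ε * ‖u‖ ^ 2 ≤ ⟪u, P u⟫ := hPcoer u
  have h2 : ε * ‖y‖ ^ 2 ≤ ⟪y, (R - Q ∘L K) y⟫ := hSchur y
  have hxu : ‖x‖ ≤ ‖u‖ + ‖K‖ * ‖y‖ := by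
    have : x = u - K y := by rw [hu]; abel
    calc ‖x‖ = ‖u - K y‖ := by rw [this]
      _ ≤ ‖u‖ + ‖K y‖ := norm_sub_le _ _
      _ ≤ ‖u‖ + ‖K‖ * ‖y‖ := by linarith [K.le_opNorm y]
  have hδ : ε / (2 * ‖K‖ ^ 2 + 2) * (2 * ‖K‖ ^ 2 + 2) = ε := by
    field_simp
  rw [key]
  have hδpos : (0:ℝ) ≤ ε / (2 * ‖K‖ ^ 2 + 2) := by positivity
  have hx2 : ‖x‖ ^ 2 ≤ 2 * ‖u‖ ^ 2 + 2 * ‖K‖ ^ 2 * ‖y‖ ^ 2 := by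
    nlinarith [hxu, norm_nonneg x, norm_nonneg u, mul_nonneg (norm_nonneg K) (norm_nonneg y),
      sq_nonneg (‖u‖ - ‖K‖ * ‖y‖)]
  have hsum : ‖x‖ ^ 2 + ‖y‖ ^ 2 ≤ (2 * ‖K‖ ^ 2 + 2) * (‖u‖ ^ 2 + ‖y‖ ^ 2) := by
    nlinarith [sq_nonneg ‖u‖, sq_nonneg ‖y‖, sq_nonneg (‖K‖ * ‖y‖)]
  calc ε / (2 * ‖K‖ ^ 2 + 2) * (‖x‖ ^ 2 + ‖y‖ ^ 2)
      ≤ ε / (2 * ‖K‖ ^ 2 + 2) * ((2 * ‖K‖ ^ 2 + 2) * (‖u‖ ^ 2 + ‖y‖ ^ 2)) :=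
        mul_le_mul_of_nonneg_left hsum hδpos
    _ = ε * ‖u‖ ^ 2 + ε * ‖y‖ ^ 2 := by rw [← mul_assoc, hδ]; ring
    _ ≤ ⟪u, P u⟫ + ⟪y, (R - Q ∘L K) y⟫ := add_le_add h1 h2
end

section
/- Let H be a Hilbert space, and let T, A : H →L H, C : H →L ℝ^m be bounded operators, P : H →L H self-adjoint with P ≽ ε·I for some ε > 0, and suppose A* P T + T* P A + C* C ≼ −ε·I (i.e., ⟪x, (A* P T + T* P A + C* C) x⟫ ≤ −ε‖x‖² for all x). Then for any continuously differentiable trajectory x : [0,∞) → H satisfying d/dt (T x(t)) = A x(t) and with z(t) = C x(t), the function V(t) = ⟪T x(t), P (T x(t))⟫ satisfies d/dt V(t) ≤ −‖z(t)‖² − ε‖x(t)‖². -/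
open RealInnerProductSpace ContinuousLinearMap

/-- Lyapunov dissipation for a PIE trajectory: if `P ≽ εI` is self-adjoint and
`A* P T + T* P A + C* C ≼ -εI`, then along any trajectory with `d/dt (T x(t)) = A x(t)`,
the Lyapunov functional `V(t) = ⟪T x(t), P T x(t)⟫` is differentiable with derivative
at most `-‖z(t)‖² - ε ‖x(t)‖²`, where `z(t) = C x(t)`. -/
theorem lyapunov_dissipation
    {H : Type*} [NormedAddCommGroup H] [InnerProductSpace ℝ H] [CompleteSpace H]
    {m : ℕ} (T A : H →L[ℝ] H) (C : H →L[ℝ] EuclideanSpace ℝ (Fin m))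
    (P : H →L[ℝ] H) (hP : IsSelfAdjoint P)
    (ε : ℝ) (hε : 0 < ε)
    (hPpos : ∀ v : H, ε * ‖v‖ ^ 2 ≤ ⟪v, P v⟫)
    (hLPI : ∀ v : H,
      ⟪v, (adjoint A ∘L P ∘L T + adjoint T ∘L P ∘L A + adjoint C ∘L C) v⟫ ≤ -ε * ‖v‖ ^ 2)
    (x : ℝ → H) (hx : Continuous x)
    (htraj : ∀ t : ℝ, 0 ≤ t → HasDerivAt (fun τ => T (x τ)) (A (x t)) t) :
    ∀ t : ℝ, 0 ≤ t → ∃ v : ℝ,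
      HasDerivAt (fun τ => ⟪T (x τ), P (T (x τ))⟫) v t ∧
        v ≤ -‖C (x t)‖ ^ 2 - ε * ‖x t‖ ^ 2 := by
  intro t ht
  have hg := htraj t ht
  have hPg : HasDerivAt (fun τ => P (T (x τ))) (P (A (x t))) t :=
    P.hasFDerivAt.comp_hasDerivAt t hg
  refine ⟨⟪T (x t), P (A (x t))⟫ + ⟪A (x t), P (T (x t))⟫, hg.inner ℝ hPg, ?_⟩
  have h := hLPI (x t)
  simp only [ContinuousLinearMap.add_apply, ContinuousLinearMap.comp_apply,
    inner_add_right] at h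
  rw [ContinuousLinearMap.adjoint_inner_right, ContinuousLinearMap.adjoint_inner_right,
    ContinuousLinearMap.adjoint_inner_right, real_inner_self_eq_norm_sq] at h
  have h2 : ⟪T (x t), P (A (x t))⟫ = ⟪x t, T.adjoint (P (A (x t)))⟫ := by
    rw [ContinuousLinearMap.adjoint_inner_right]
  linarith [h, h2.symm ▸ h]
end

section
/- Under the setup of the Lyapunov dissipation inequality (P ≽ εI self-adjoint, A* P T + T* P A + C* C ≼ −εI, trajectory d/dt(T x(t)) = A x(t), z(t) = C x(t), x continuous with x(0) = B x₀ for a bounded operator B : ℝ^p → H), if additionally the scalar 'trace condition' ⟪B eᵢ, P B eᵢ⟫ summed over an orthonormal basis (eᵢ) of ℝ^p is less than γ², and ‖x₀‖ = 1, then ∫₀^T ‖z(t)‖² dt ≤ ⟪T x(0), P T x(0)⟫ for all T, and if moreover p = 1 then ∫₀^∞ ‖z(t)‖² dt < γ². -/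
open RealInnerProductSpace ContinuousLinearMap MeasureTheory

/-- PIE H₂-norm bound: under the Lyapunov dissipation setup with initial condition
`x(0) = B x₀`, `‖x₀‖ = 1`, the trace condition `∑ᵢ ⟪B eᵢ, P B eᵢ⟫ < γ²`, and
`⟪T B x₀, P T B x₀⟫ < γ²`, the output energy on `[0, τ]` is bounded by the initial value
of the Lyapunov functional, and in the single-input case `p = 1` the total output energy
is strictly less than `γ²`. -/
theorem pie_h2_norm_bound
    {H : Type*} [NormedAddCommGroup H] [InnerProductSpace ℝ H] [CompleteSpace H]
    {m p : ℕ} (T A : H →L[ℝ] H) (C : H →L[ℝ] EuclideanSpace ℝ (Fin m))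
    (B : EuclideanSpace ℝ (Fin p) →L[ℝ] H)
    (P : H →L[ℝ] H) (hP : IsSelfAdjoint P)
    (ε γ : ℝ) (hε : 0 < ε) (hγ : 0 < γ)
    (hPpos : ∀ v : H, ε * ‖v‖ ^ 2 ≤ ⟪v, P v⟫)
    (hLPI : ∀ v : H,
      ⟪v, (adjoint A ∘L P ∘L T + adjoint T ∘L P ∘L A + adjoint C ∘L C) v⟫ ≤ -ε * ‖v‖ ^ 2)
    (x : ℝ → H) (hx : Continuous x)
    (htraj : ∀ t : ℝ, 0 ≤ t → HasDerivAt (fun τ => T (x τ)) (A (x t)) t)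
    (x₀ : EuclideanSpace ℝ (Fin p)) (hx₀ : ‖x₀‖ = 1) (hinit : x 0 = B x₀)
    (htrace : ∑ i : Fin p, ⟪B (EuclideanSpace.single i 1), P (B (EuclideanSpace.single i 1))⟫
        < γ ^ 2)
    (hV0 : ⟪T (B x₀), P (T (B x₀))⟫ < γ ^ 2) :
    (∀ τ : ℝ, 0 ≤ τ →
        (∫ t in Set.Ioc (0 : ℝ) τ, ‖C (x t)‖ ^ 2) ≤ ⟪T (x 0), P (T (x 0))⟫) ∧
      (p = 1 → (∫ t in Set.Ioi (0 : ℝ), ‖C (x t)‖ ^ 2) < γ ^ 2) := by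
  set f : ℝ → ℝ := fun t => ‖C (x t)‖ ^ 2 with hf
  have hfcont : Continuous f := by continuity
  set V : ℝ → ℝ := fun t => ⟪T (x t), P (T (x t))⟫ with hVdef
  set g : ℝ → ℝ := fun τ => ∫ t in (0:ℝ)..τ, f t with hgdef
  set W : ℝ → ℝ := fun t => V t + g t with hWdef
  -- derivative of V
  have hVnonneg : ∀ t, 0 ≤ V t := fun t =>
    le_trans (by positivity) (hPpos (T (x t)))
  have hVcont : Continuous V := by
    have : Continuous fun t => T (x t) := T.continuous.comp hx
    exact (continuous_inner.comp (this.prodMk ((P.continuous.comp this)))).congr (fun _ => rfl)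
  have hg' : ∀ t : ℝ, HasDerivAt g (f t) t := fun t =>
    intervalIntegral.integral_hasDerivAt_right
      (hfcont.intervalIntegrable _ _)
      hfcont.aestronglyMeasurable.stronglyMeasurableAtFilter hfcont.continuousAt
  have hbound : ∀ v : H, ⟪A v, P (T v)⟫ + ⟪T v, P (A v)⟫ + ‖C v‖ ^ 2 ≤ 0 := by
    intro v
    have h := hLPI v
    have e1 : ⟪v, (adjoint A ∘L P ∘L T + adjoint T ∘L P ∘L A + adjoint C ∘L C) v⟫
        = ⟪A v, P (T v)⟫ + ⟪T v, P (A v)⟫ + ‖C v‖ ^ 2 := by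
      simp only [ContinuousLinearMap.add_apply, ContinuousLinearMap.comp_apply,
        inner_add_right]
      rw [ContinuousLinearMap.adjoint_inner_right, ContinuousLinearMap.adjoint_inner_right,
        ContinuousLinearMap.adjoint_inner_right, real_inner_self_eq_norm_sq]
    rw [e1] at h
    nlinarith [sq_nonneg ‖v‖]
  have hW' : ∀ t : ℝ, 0 ≤ t → HasDerivAt W (⟪A (x t), P (T (x t))⟫ + ⟪T (x t), P (A (x t))⟫ + f t) t := by
    intro t ht
    have hy := htraj t ht
    have hPy : HasDerivAt (fun τ => P (T (x τ))) (P (A (x t))) t :=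
      (P.hasFDerivAt.comp_hasDerivAt t hy)
    have hV' : HasDerivAt V (⟪T (x t), P (A (x t))⟫ + ⟪A (x t), P (T (x t))⟫) t :=
      HasDerivAt.inner ℝ hy hPy
    have := hV'.add (hg' t)
    rw [show ⟪A (x t), P (T (x t))⟫ + ⟪T (x t), P (A (x t))⟫ + f t = ⟪T (x t), P (A (x t))⟫ + ⟪A (x t), P (T (x t))⟫ + f t by ring]
    exact this
  -- W is antitone on Ici 0
  have hWanti : AntitoneOn W (Set.Ici (0:ℝ)) := by
    have hWcont : ContinuousOn W (Set.Ici 0) := by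
      apply Continuous.continuousOn
      exact hVcont.add (intervalIntegral.continuous_primitive (fun a b => hfcont.intervalIntegrable a b) 0)
    apply antitoneOn_of_deriv_nonpos (convex_Ici 0) hWcont
    · intro t ht
      rw [interior_Ici] at ht
      exact ((hW' t (le_of_lt ht)).differentiableAt).differentiableWithinAt
    · intro t ht
      rw [interior_Ici] at ht
      rw [(hW' t (le_of_lt ht)).deriv]
      exact hbound (x t)
  have hmain : ∀ τ : ℝ, 0 ≤ τ → (∫ t in Set.Ioc (0:ℝ) τ, f t) ≤ V 0 := by
    intro τ hτ
    have h1 : W τ ≤ W 0 := hWanti (Set.self_mem_Ici) (Set.mem_Ici.mpr hτ) hτ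
    have h2 : g 0 = 0 := intervalIntegral.integral_same
    have h3 : g τ = ∫ t in Set.Ioc (0:ℝ) τ, f t := intervalIntegral.integral_of_le hτ
    have := hVnonneg τ
    simp only [hWdef, h2, add_zero] at h1
    linarith [h1, h3 ▸ (by linarith : g τ ≤ V 0)]
  constructor
  · exact hmain
  · intro _
    have hV0' : V 0 < γ ^ 2 := by rw [hVdef]; simpa [hinit] using hV0
    by_cases hInt : IntegrableOn f (Set.Ioi 0) volume
    · have htend := MeasureTheory.intervalIntegral_tendsto_integral_Ioi 0 hInt Filter.tendsto_id
      have hle : (∫ t in Set.Ioi (0:ℝ), f t) ≤ V 0 := by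
        refine le_of_tendsto htend ?_
        filter_upwards [Filter.eventually_ge_atTop (0:ℝ)] with b hb
        rw [_root_.id, intervalIntegral.integral_of_le hb]
        exact hmain b hb
      exact lt_of_le_of_lt hle hV0'
    · rw [MeasureTheory.integral_undef hInt]
      positivity
end

section
/- Let H be a Hilbert space, T, A : H →L H bounded, P : H →L H self-adjoint with P ≽ εI, ε > 0, and suppose A* P T + T* P A ≼ −εI. Then any continuously differentiable trajectory with d/dt(T x(t)) = A x(t) satisfies ⟪T x(t), P T x(t)⟫ ≤ ⟪T x(0), P T x(0)⟫ for all t ≥ 0, and ∫₀^∞ ‖x(t)‖² dt ≤ (1/ε)⟪T x(0), P T x(0)⟫. -/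
/-!
Along a trajectory the Lyapunov functional `V(t) = ⟪T x(t), P T x(t)⟫` has derivative
`⟪A x, P T x⟫ + ⟪T x, P A x⟫ = ⟪x, (A* P T + T* P A) x⟫ ≤ -ε ‖x‖²`. Integrating over `[0, b]`
gives `V(b) + ε ∫₀ᵇ ‖x‖² ≤ V(0)`; since `V ≥ 0` by coercivity of `P`, this yields both the
monotonicity and, letting `b → ∞`, the `L²` bound.
-/

open RealInnerProductSpace ContinuousLinearMap MeasureTheory

open Set Filter

theorem intervalIntegral_le_sub_of_hasDerivAt_le_neg {V V' g : ℝ → ℝ} {a b : ℝ} (hab : a ≤ b)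
    (hV : ∀ t ∈ Icc a b, HasDerivAt V (V' t) t) (hg : IntegrableOn g (Icc a b))
    (hle : ∀ t ∈ Icc a b, V' t ≤ -g t) :
    ∫ t in a..b, g t ≤ V a - V b := by
  have key := intervalIntegral.integral_le_sub_of_hasDeriv_right_of_le hab
    (fun t ht => (hV t ht).continuousAt.neg.continuousWithinAt)
    (fun t ht => (hV t (Ioo_subset_Icc_self ht)).neg.hasDerivWithinAt) hg
    (fun t ht => le_neg_of_le_neg (hle t (Ioo_subset_Icc_self ht)))
  simp only [Pi.neg_apply] at key
  linarith

theorem setIntegral_Ioi_le_of_forall_intervalIntegral_le {f : ℝ → ℝ} {a C : ℝ}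
    (h : ∀ b, a ≤ b → ∫ t in a..b, f t ≤ C) : ∫ t in Ioi a, f t ≤ C := by
  by_cases hf : IntegrableOn f (Ioi a)
  · exact le_of_tendsto (intervalIntegral_tendsto_integral_Ioi a hf tendsto_id)
      ((eventually_ge_atTop a).mono h)
  · -- the junk value `0` of a non-integrable integral equals `∫ t in a..a, f t ≤ C`
    simpa [integral_undef hf] using h a le_rfl

section InnerProductSpace

variable {H : Type*} [NormedAddCommGroup H] [InnerProductSpace ℝ H]

theorem HasDerivAt.inner_apply_self {y : ℝ → H} {y' : H} {t : ℝ} (P : H →L[ℝ] H)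
    (hy : HasDerivAt y y' t) :
    HasDerivAt (fun τ => ⟪y τ, P (y τ)⟫) (⟪y', P (y t)⟫ + ⟪y t, P y'⟫) t :=
  (hy.inner ℝ (P.hasFDerivAt.comp_hasDerivAt t hy)).congr_deriv (add_comm _ _)

variable [CompleteSpace H]

theorem inner_adjoint_comp_add_adjoint_comp_apply (T A P : H →L[ℝ] H) (v : H) :
    ⟪v, (adjoint A ∘L P ∘L T + adjoint T ∘L P ∘L A) v⟫ = ⟪A v, P (T v)⟫ + ⟪T v, P (A v)⟫ := by
  simp only [add_apply, comp_apply, inner_add_right, adjoint_inner_right]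

theorem lyapunov_dissipation_le {T A P : H →L[ℝ] H} {ε : ℝ}
    (hLPI : ∀ v : H, ⟪v, (adjoint A ∘L P ∘L T + adjoint T ∘L P ∘L A) v⟫ ≤ -ε * ‖v‖ ^ 2)
    {x : ℝ → H} (hx : Continuous x)
    (htraj : ∀ t : ℝ, 0 ≤ t → HasDerivAt (fun τ => T (x τ)) (A (x t)) t) {b : ℝ} (hb : 0 ≤ b) :
    ε * ∫ t in (0 : ℝ)..b, ‖x t‖ ^ 2 ≤ ⟪T (x 0), P (T (x 0))⟫ - ⟪T (x b), P (T (x b))⟫ := by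
  rw [← intervalIntegral.integral_const_mul]
  refine intervalIntegral_le_sub_of_hasDerivAt_le_neg hb
    (fun t ht => (htraj t ht.1).inner_apply_self P) (by fun_prop : Continuous _).integrableOn_Icc fun t _ => ?_
  rw [← inner_adjoint_comp_add_adjoint_comp_apply, ← neg_mul]
  exact hLPI (x t)

end InnerProductSpace

theorem pie_lyapunov_energy_estimate_general
    {H : Type*} [NormedAddCommGroup H] [InnerProductSpace ℝ H] [CompleteSpace H]
    (T A : H →L[ℝ] H) (P : H →L[ℝ] H)
    (ε : ℝ) (hε : 0 < ε)
    (hPpos : ∀ v : H, ε * ‖v‖ ^ 2 ≤ ⟪v, P v⟫)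
    (hLPI : ∀ v : H,
      ⟪v, (adjoint A ∘L P ∘L T + adjoint T ∘L P ∘L A) v⟫ ≤ -ε * ‖v‖ ^ 2)
    (x : ℝ → H) (hx : Continuous x)
    (htraj : ∀ t : ℝ, 0 ≤ t → HasDerivAt (fun τ => T (x τ)) (A (x t)) t) :
    (∀ t : ℝ, 0 ≤ t → ⟪T (x t), P (T (x t))⟫ ≤ ⟪T (x 0), P (T (x 0))⟫) ∧
      (∫ t in Set.Ioi (0 : ℝ), ‖x t‖ ^ 2) ≤ (1 / ε) * ⟪T (x 0), P (T (x 0))⟫ := by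
  have hdiss := fun b (hb : 0 ≤ b) => lyapunov_dissipation_le hLPI hx htraj hb
  have hV_nonneg : ∀ t, 0 ≤ ⟪T (x t), P (T (x t))⟫ := fun t =>
    (by positivity : 0 ≤ ε * ‖T (x t)‖ ^ 2).trans (hPpos _)
  refine ⟨fun t ht => ?_, setIntegral_Ioi_le_of_forall_intervalIntegral_le fun b hb => ?_⟩
  · have hint : 0 ≤ ∫ s in (0 : ℝ)..t, ‖x s‖ ^ 2 :=
      intervalIntegral.integral_nonneg ht fun s _ => sq_nonneg ‖x s‖
    linarith [hdiss t ht, mul_nonneg hε.le hint]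
  · rw [one_div, ← div_eq_inv_mul, le_div_iff₀' hε]
    linarith [hdiss b hb, hV_nonneg b]

/-- PIE Lyapunov stability/energy estimate: if `P ≽ εI` is self-adjoint and
`A* P T + T* P A ≼ -εI`, then along any trajectory with `d/dt (T x(t)) = A x(t)` the
Lyapunov functional `⟪T x(t), P T x(t)⟫` is nonincreasing from its initial value and the
state satisfies the L₂ bound `∫₀^∞ ‖x(t)‖² dt ≤ (1/ε) ⟪T x(0), P T x(0)⟫`. -/
theorem pie_lyapunov_energy_estimate
    {H : Type*} [NormedAddCommGroup H] [InnerProductSpace ℝ H] [CompleteSpace H]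
    (T A : H →L[ℝ] H) (P : H →L[ℝ] H) (hP : IsSelfAdjoint P)
    (ε : ℝ) (hε : 0 < ε)
    (hPpos : ∀ v : H, ε * ‖v‖ ^ 2 ≤ ⟪v, P v⟫)
    (hLPI : ∀ v : H,
      ⟪v, (adjoint A ∘L P ∘L T + adjoint T ∘L P ∘L A) v⟫ ≤ -ε * ‖v‖ ^ 2)
    (x : ℝ → H) (hx : Continuous x)
    (htraj : ∀ t : ℝ, 0 ≤ t → HasDerivAt (fun τ => T (x τ)) (A (x t)) t) :
    (∀ t : ℝ, 0 ≤ t → ⟪T (x t), P (T (x t))⟫ ≤ ⟪T (x 0), P (T (x 0))⟫) ∧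
      (∫ t in Set.Ioi (0 : ℝ), ‖x t‖ ^ 2) ≤ (1 / ε) * ⟪T (x 0), P (T (x 0))⟫ :=
  pie_lyapunov_energy_estimate_general T A P ε hε hPpos hLPI x hx htraj
end
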